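/- Let a = (a_i)_{i≥1} and b = (b_i)_{i≥1} belong to C = ∏_{i≥1} [2^{−2i}, 2^{−2i+1}] (with a_0 = b_0 = 1), and let K, L ∈ (0,∞). If the metric spaces (Υ, K·R[a]) and (Υ, L·R[b]) are isometric, then a = b (and moreover K = L). -/

import Mathlib

/-- The set `Υ = {(0,0)} ∪ ((0,1] × ℤ_{≥0})`, an element `(s, i)` being the
point at parameter `s` on the `i`-th edge. -/
def Upsilon : Type := {p : ℝ × ℕ // p = (0, 0) ∨ (0 < p.1 ∧ p.1 ≤ 1)}

/-- The distance function `R[a]` on `Υ`: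
`R[a]((s,i), (t,j)) = a i * |s - t|` if `i = j`, and
`R[a]((s,i), (t,j)) = a i * s + a j * t` otherwise. -/
noncomputable def Rmet (a : ℕ → ℝ) (p q : Upsilon) : ℝ :=
  if p.1.2 = q.1.2 then a p.1.2 * |p.1.1 - q.1.1|
  else a p.1.2 * p.1.1 + a q.1.2 * q.1.1

/-- Membership in `C = ∏_{i ≥ 1} [2^{-2i}, 2^{-2i+1}]`, together with the
convention `a 0 = 1`. -/
def MemC (a : ℕ → ℝ) : Prop :=
  a 0 = 1 ∧ ∀ i : ℕ, 1 ≤ i →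
    a i ∈ Set.Icc ((2 : ℝ) ^ (-(2 * (i : ℤ)))) ((2 : ℝ) ^ (-(2 * (i : ℤ)) + 1))

/-!
An isometry must fix the origin, since only there do three points share an arbitrarily small
distance. It then preserves the tips `(1, i)`, which are the points of `Υ` that lie strictly
between the origin and no other point. Hence the distances `K·a i` from the origin to the
tips form the same set as the `L·b j`; both being strictly decreasing sequences, they agree
termwise, and `a 0 = b 0 = 1` gives `K = L`.
-/

open Set Function

namespace Upsilon

def origin : Upsilon := ⟨(0, 0), Or.inl rfl⟩

def tip (i : ℕ) : Upsilon := ⟨(1, i), Or.inr ⟨one_pos, le_rfl⟩⟩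

lemma ext {p q : Upsilon} (h₁ : p.1.1 = q.1.1) (h₂ : p.1.2 = q.1.2) : p = q :=
  Subtype.ext (Prod.ext h₁ h₂)

lemma param_nonneg (p : Upsilon) : 0 ≤ p.1.1 := by
  rcases p.2 with h | h
  · rw [h]
  · exact h.1.le

lemma param_le_one (p : Upsilon) : p.1.1 ≤ 1 := by
  rcases p.2 with h | h
  · rw [h]; exact zero_le_one
  · exact h.2

lemma param_pos_of_ne_origin {p : Upsilon} (hp : p ≠ origin) : 0 < p.1.1 := by
  rcases p.2 with h | h
  · exact absurd (Subtype.ext h) hp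
  · exact h.1

@[simp] lemma tip_param (i : ℕ) : (tip i).1.1 = 1 := rfl

@[simp] lemma tip_edge (i : ℕ) : (tip i).1.2 = i := rfl

lemma eq_tip_of_param_eq_one {p : Upsilon} (hp : p.1.1 = 1) : p = tip p.1.2 :=
  ext hp rfl

end Upsilon

open Upsilon

lemma Rmet_smul (c : ℝ) (w : ℕ → ℝ) (p q : Upsilon) :
    Rmet (c • w) p q = c * Rmet w p q := by
  unfold Rmet
  split_ifs <;> simp only [Pi.smul_apply, smul_eq_mul] <;> ring

lemma Rmet_of_edge_eq (w : ℕ → ℝ) {p q : Upsilon} (h : p.1.2 = q.1.2) :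
    Rmet w p q = w p.1.2 * |p.1.1 - q.1.1| :=
  if_pos h

lemma Rmet_of_edge_ne (w : ℕ → ℝ) {p q : Upsilon} (h : p.1.2 ≠ q.1.2) :
    Rmet w p q = w p.1.2 * p.1.1 + w q.1.2 * q.1.1 :=
  if_neg h

lemma Rmet_origin_left (w : ℕ → ℝ) (p : Upsilon) : Rmet w origin p = w p.1.2 * p.1.1 := by
  by_cases h : origin.1.2 = p.1.2
  · rw [Rmet_of_edge_eq w h, h, show origin.1.1 = 0 from rfl, zero_sub, abs_neg,
      abs_of_nonneg (param_nonneg p)]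
  · rw [Rmet_of_edge_ne w h, show origin.1.1 = 0 from rfl, mul_zero, zero_add]

lemma Rmet_origin_tip (w : ℕ → ℝ) (i : ℕ) : Rmet w origin (tip i) = w i := by
  rw [Rmet_origin_left, tip_param, tip_edge, mul_one]

lemma MemC.pos {a : ℕ → ℝ} (ha : MemC a) (i : ℕ) : 0 < a i := by
  rcases Nat.eq_zero_or_pos i with rfl | hi
  · rw [ha.1]; exact one_pos
  · exact (zpow_pos two_pos _).trans_le (ha.2 i hi).1

lemma MemC.strictAnti {a : ℕ → ℝ} (ha : MemC a) : StrictAnti a := by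
  refine strictAnti_nat_of_succ_lt fun n => ?_
  rcases Nat.eq_zero_or_pos n with rfl | hn
  · calc a (0 + 1) ≤ (2 : ℝ) ^ (-(2 * (1 : ℤ)) + 1) := (ha.2 1 le_rfl).2
      _ < 1 := by norm_num
      _ = a 0 := ha.1.symm
  · calc a (n + 1) ≤ (2 : ℝ) ^ (-(2 * ((n : ℤ) + 1)) + 1) := by
          exact_mod_cast (ha.2 (n + 1) n.succ_pos).2
      _ < 2 ^ (-(2 * (n : ℤ))) := zpow_lt_zpow_right₀ one_lt_two (by omega)
      _ ≤ a n := (ha.2 n hn).1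

lemma StrictAnti.eq_of_range_eq {α β : Type*} [LinearOrder α] [WellFoundedLT α] [Preorder β]
    {u v : α → β} (hu : StrictAnti u) (hv : StrictAnti v) (h : range u = range v) : u = v :=
  (StrictMono.range_inj (γ := βᵒᵈ) hu hv).1 h

section DistanceFunction

variable {X Y : Type*} {d : X → X → ℝ} {d' : Y → Y → ℝ} {f : X → Y}

def IsBranchPoint (d : X → X → ℝ) (x : X) : Prop :=
  ∀ δ > 0, ∃ r ∈ Ioo 0 δ, ∃ p : Fin 3 → X, Injective p ∧ ∀ k, d x (p k) = r

def IsTerminal (d : X → X → ℝ) (o x : X) : Prop :=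
  ∀ q, d o q = d o x + d x q → q = x

lemma IsBranchPoint.map (hd : ∀ p q, d' (f p) (f q) = d p q) (hf : Injective f) {x : X}
    (hx : IsBranchPoint d x) : IsBranchPoint d' (f x) := by
  intro δ hδ
  obtain ⟨r, hr, p, hp, hpr⟩ := hx δ hδ
  exact ⟨r, hr, f ∘ p, hf.comp hp, fun k => (hd x (p k)).trans (hpr k)⟩

lemma isTerminal_map_iff (hd : ∀ p q, d' (f p) (f q) = d p q) (hf : Bijective f) {o x : X} :
    IsTerminal d' (f o) (f x) ↔ IsTerminal d o x := by
  constructor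
  · intro hx q hq
    exact hf.1 (hx (f q) (by simpa only [hd] using hq))
  · intro hx q' hq'
    obtain ⟨q, rfl⟩ := hf.2 q'
    rw [hd, hd, hd] at hq'
    rw [hx q hq']

end DistanceFunction

section PositiveWeights

variable {w : ℕ → ℝ} (hw : ∀ i, 0 < w i)
include hw

lemma isBranchPoint_origin : IsBranchPoint (Rmet w) origin := by
  intro δ hδ
  set r := min (δ / 2) (min (w 0) (min (w 1) (w 2)))
  have hr : 0 < r := lt_min (half_pos hδ) (lt_min (hw 0) (lt_min (hw 1) (hw 2)))
  have hrw : ∀ k : Fin 3, r ≤ w k := by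
    intro k
    fin_cases k <;> simp [r]
  let p (k : Fin 3) : Upsilon :=
    ⟨(r / w k, k), Or.inr ⟨div_pos hr (hw k), (div_le_one (hw k)).2 (hrw k)⟩⟩
  refine ⟨r, ⟨hr, (min_le_left _ _).trans_lt (half_lt_self hδ)⟩, p, ?_, fun k => ?_⟩
  · intro k l hkl
    exact Fin.ext (congrArg (fun q : Upsilon => q.1.2) hkl)
  · rw [Rmet_origin_left]
    exact mul_div_cancel₀ r (hw k).ne'

lemma edge_eq_of_Rmet_lt {x q : Upsilon} (h : Rmet w x q < w x.1.2 * x.1.1) :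
    q.1.2 = x.1.2 := by
  by_contra hne
  rw [Rmet_of_edge_ne w (Ne.symm hne)] at h
  linarith [mul_nonneg (hw q.1.2).le (param_nonneg q)]

lemma eq_of_Rmet_eq {x q q' : Upsilon} (hq : q.1.2 = x.1.2) (hq' : q'.1.2 = x.1.2)
    (h : Rmet w x q = Rmet w x q') (hside : q.1.1 < x.1.1 ↔ q'.1.1 < x.1.1) : q = q' := by
  rw [Rmet_of_edge_eq w hq.symm, Rmet_of_edge_eq w hq'.symm] at h
  have habs := mul_left_cancel₀ (hw x.1.2).ne' h
  refine Upsilon.ext ?_ (hq.trans hq'.symm)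
  by_cases hlt : q.1.1 < x.1.1
  · rw [abs_of_pos (sub_pos.2 hlt), abs_of_pos (sub_pos.2 (hside.1 hlt))] at habs
    linarith
  · have hlt' := mt hside.2 hlt
    rw [abs_of_nonpos (by linarith), abs_of_nonpos (by linarith)] at habs
    linarith

lemma not_isBranchPoint {x : Upsilon} (hx : x ≠ origin) : ¬ IsBranchPoint (Rmet w) x := by
  intro hbranch
  obtain ⟨r, ⟨-, hr⟩, p, hp, hpr⟩ :=
    hbranch (w x.1.2 * x.1.1) (mul_pos (hw _) (param_pos_of_ne_origin hx))
  have hedge (k : Fin 3) : (p k).1.2 = x.1.2 := edge_eq_of_Rmet_lt hw ((hpr k).trans_lt hr)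
  obtain ⟨k, l, hkl, hside⟩ :=
    Fintype.exists_ne_map_eq_of_card_lt (fun k => decide ((p k).1.1 < x.1.1)) (by simp)
  exact hkl (hp (eq_of_Rmet_eq hw (hedge k) (hedge l) ((hpr k).trans (hpr l).symm)
    (decide_eq_decide.1 hside)))

lemma isTerminal_origin_iff {x : Upsilon} : IsTerminal (Rmet w) origin x ↔ x ∈ range tip := by
  constructor
  · intro hx
    by_contra hnot
    have hx1 : x.1.1 < 1 :=
      (param_le_one x).lt_of_ne fun h => hnot ⟨x.1.2, (eq_tip_of_param_eq_one h).symm⟩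
    have hdist : Rmet w origin (tip x.1.2) = Rmet w origin x + Rmet w x (tip x.1.2) := by
      rw [Rmet_origin_tip, Rmet_origin_left, Rmet_of_edge_eq w (p := x) (q := tip x.1.2) rfl,
        tip_param, abs_of_neg (by linarith)]
      ring
    exact hnot ⟨x.1.2, hx _ hdist⟩
  · rintro ⟨i, rfl⟩ q hq
    rw [Rmet_origin_left, Rmet_origin_tip] at hq
    have hi := hw i
    by_cases he : (tip i).1.2 = q.1.2
    · rw [Rmet_of_edge_eq w he, tip_param, tip_edge,
        abs_of_nonneg (by linarith [param_le_one q])] at hq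
      rw [tip_edge] at he
      rw [← he] at hq
      exact Upsilon.ext (by rw [tip_param]; nlinarith) he.symm
    · rw [Rmet_of_edge_ne w he, tip_param, tip_edge] at hq
      linarith

end PositiveWeights

lemma range_eq_of_isometry {v w : ℕ → ℝ} (hv : ∀ i, 0 < v i) (hw : ∀ i, 0 < w i)
    {f : Upsilon → Upsilon} (hf : Bijective f) (hfo : f origin = origin)
    (hd : ∀ p q, Rmet w (f p) (f q) = Rmet v p q) : range v = range w := by
  have htips : f '' range tip = range tip := by
    ext y
    obtain ⟨x, rfl⟩ := hf.2 y
    rw [hf.1.mem_set_image, ← isTerminal_origin_iff hv, ← isTerminal_origin_iff hw,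
      ← isTerminal_map_iff hd hf, hfo]
  have hrange (u : ℕ → ℝ) : range u = Rmet u origin '' range tip := by
    rw [← range_comp]
    exact congrArg range (funext fun i => (Rmet_origin_tip u i).symm)
  calc range v = Rmet v origin '' range tip := hrange v
    _ = Rmet w origin '' (f '' range tip) := by
      rw [image_image]
      refine image_congr fun x _ => ?_
      rw [← hd, hfo]
    _ = range w := by rw [htips, hrange w]

/-- Let `a, b ∈ C` (with `a 0 = b 0 = 1`) and
`K, L ∈ (0, ∞)`.  If `(Υ, K·R[a])` and `(Υ, L·R[b])` are isometric — i.e.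
there is a bijection `f : Υ → Υ` with `L * R[b] (f p) (f q) = K * R[a] p q`
for all `p, q` — then `a = b` and `K = L`. -/
theorem statement12 (a b : ℕ → ℝ) (ha : MemC a) (hb : MemC b)
    (K L : ℝ) (hK : 0 < K) (hL : 0 < L)
    (f : Upsilon → Upsilon) (hf : Function.Bijective f)
    (hiso : ∀ p q : Upsilon, L * Rmet b (f p) (f q) = K * Rmet a p q) :
    a = b ∧ K = L := by
  have hKa : ∀ i, 0 < (K • a) i := fun i => mul_pos hK (ha.pos i)
  have hLb : ∀ i, 0 < (L • b) i := fun i => mul_pos hL (hb.pos i)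
  have hd : ∀ p q, Rmet (L • b) (f p) (f q) = Rmet (K • a) p q := by
    intro p q
    rw [Rmet_smul, Rmet_smul, hiso]
  have hfo : f origin = origin := by
    by_contra hne
    exact not_isBranchPoint hLb hne ((isBranchPoint_origin hKa).map hd hf.1)
  have hKaLb : K • a = L • b :=
    (ha.strictAnti.const_mul hK).eq_of_range_eq (hb.strictAnti.const_mul hL)
      (range_eq_of_isometry hKa hLb hf hfo hd)
  have hKL : K = L := by
    simpa [ha.1, hb.1] using congrFun hKaLb 0
  subst hKL
  exact ⟨smul_right_injective _ hK.ne' hKaLb, rfl⟩
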